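/- arXiv:2012.06211 — 3 statements merged into one kernel-verified Lean document; each statement's English description precedes it below -/
import Mathlib

section
/- Let d ≥ 2 and let ρ̂_1, …, ρ̂_{d−1} ∈ (−1, 1). Define the d×d matrix R by R_{ii} = 1 and R_{ij} = R_{ji} = ∏_{k=i}^{j−1} ρ̂_k for i < j. Then R is symmetric positive definite. -/
open Finset
open scoped Matrix

/-- The Doust correlation matrix built from pairwise correlations is symmetric
positive definite. -/
theorem doust_correlation_posDef
    (d : ℕ) (hd : 2 ≤ d) (ρhat : ℕ → ℝ)
    (hρ : ∀ k, k < d - 1 → ρhat k ∈ Set.Ioo (-1 : ℝ) 1)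
    (R : Matrix (Fin d) (Fin d) ℝ)
    (hR : ∀ i j : Fin d,
      R i j = ∏ k ∈ Finset.Ico (min (i : ℕ) (j : ℕ)) (max (i : ℕ) (j : ℕ)), ρhat k) :
    R.IsSymm ∧ R.PosDef := by
  have hsym : R.IsSymm := by
    rw [Matrix.IsSymm]
    ext i j
    rw [Matrix.transpose_apply, hR, hR, min_comm, max_comm]
  refine ⟨hsym, ?_⟩
  -- squares of off-one-diagonal entries are < 1
  have hpos : ∀ k, k < d - 1 → 0 < 1 - ρhat k ^ 2 := by
    intro k hk
    obtain ⟨h1, h2⟩ := hρ k hk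
    nlinarith
  -- the Cholesky "diagonal" factors
  set g : ℕ → ℝ := fun j => if j = 0 then 1 else Real.sqrt (1 - ρhat (j - 1) ^ 2) with hg
  have hgpos : ∀ j, j < d → 0 < g j := by
    intro j hj
    cases j with
    | zero => simp [hg]
    | succ m =>
      have hm : m < d - 1 := by omega
      simp only [hg, Nat.succ_ne_zero, if_false, Nat.add_sub_cancel]
      exact Real.sqrt_pos.2 (hpos m hm)
  have hgsq : ∀ m, m < d - 1 → g (m + 1) ^ 2 = 1 - ρhat m ^ 2 := by
    intro m hm
    simp only [hg, Nat.succ_ne_zero, if_false, Nat.add_sub_cancel]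
    exact Real.sq_sqrt (hpos m hm).le
  -- the Cholesky factor
  set L : Matrix (Fin d) (Fin d) ℝ :=
    Matrix.of fun i j : Fin d =>
      if (j : ℕ) ≤ (i : ℕ) then (∏ k ∈ Finset.Ico (j : ℕ) (i : ℕ), ρhat k) * g j else 0 with hL
  -- telescoping identity
  have tele : ∀ j : ℕ, j < d →
      ∑ k ∈ Finset.range (j + 1), (∏ t ∈ Finset.Ico k j, ρhat t) ^ 2 * g k ^ 2 = 1 := by
    intro j hj
    rw [Finset.sum_range_succ']
    have hstep : ∀ k ∈ Finset.range j,
        (∏ t ∈ Finset.Ico (k + 1) j, ρhat t) ^ 2 * g (k + 1) ^ 2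
          = (∏ t ∈ Finset.Ico (k + 1) j, ρhat t) ^ 2 - (∏ t ∈ Finset.Ico k j, ρhat t) ^ 2 := by
      intro k hk
      rw [Finset.mem_range] at hk
      have hk' : k < d - 1 := by omega
      rw [hgsq k hk', Finset.prod_eq_prod_Ico_succ_bot hk]
      ring
    rw [Finset.sum_congr rfl hstep,
      Finset.sum_range_sub (fun k => (∏ t ∈ Finset.Ico k j, ρhat t) ^ 2)]
    simp [hg]
  -- key computation: entries of L * Lᵀ when j ≤ i
  have key : ∀ i j : Fin d, (j : ℕ) ≤ (i : ℕ) →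
      ∑ k : Fin d, L i k * L j k = ∏ t ∈ Finset.Ico (j : ℕ) (i : ℕ), ρhat t := by
    intro i j hij
    set F : ℕ → ℝ := fun k =>
      if k ≤ (j : ℕ) then
        ((∏ t ∈ Finset.Ico k (j : ℕ), ρhat t) ^ 2 * g k ^ 2) *
          ∏ t ∈ Finset.Ico (j : ℕ) (i : ℕ), ρhat t
      else 0 with hF
    have h1 : ∀ k : Fin d, L i k * L j k = F (k : ℕ) := by
      intro k
      by_cases hk : (k : ℕ) ≤ (j : ℕ)
      · have hki : (k : ℕ) ≤ (i : ℕ) := hk.trans hij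
        simp only [hL, hF, Matrix.of_apply, if_pos hk, if_pos hki]
        rw [← Finset.prod_Ico_consecutive ρhat hk hij]
        ring
      · simp only [hL, hF, Matrix.of_apply, if_neg hk]
        ring
    calc ∑ k : Fin d, L i k * L j k = ∑ k ∈ Finset.range d, F k := by
          rw [Finset.sum_congr rfl fun k _ => h1 k, Fin.sum_univ_eq_sum_range]
      _ = ∑ k ∈ Finset.range ((j : ℕ) + 1), F k := by
          refine (Finset.sum_subset (Finset.range_subset_range.2 j.isLt) ?_).symm
          intro k _ hk
          rw [Finset.mem_range] at hk
          simp only [hF, if_neg (by omega : ¬ k ≤ (j : ℕ))]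
      _ = (∑ k ∈ Finset.range ((j : ℕ) + 1),
            (∏ t ∈ Finset.Ico k (j : ℕ), ρhat t) ^ 2 * g k ^ 2) *
            ∏ t ∈ Finset.Ico (j : ℕ) (i : ℕ), ρhat t := by
          rw [Finset.sum_mul]
          refine Finset.sum_congr rfl ?_
          intro k hk
          rw [Finset.mem_range] at hk
          simp only [hF, if_pos (by omega : k ≤ (j : ℕ))]
      _ = ∏ t ∈ Finset.Ico (j : ℕ) (i : ℕ), ρhat t := by
          rw [tele (j : ℕ) j.isLt, one_mul]
  -- R = L * Lᵀ
  have hRL : R = L * Lᵀ := by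
    ext i j
    rw [Matrix.mul_apply]
    simp only [Matrix.transpose_apply]
    rcases le_total (j : ℕ) (i : ℕ) with h | h
    · rw [key i j h, hR, min_eq_right h, max_eq_left h]
    · have : ∑ k : Fin d, L i k * L j k = ∑ k : Fin d, L j k * L i k := by
        refine Finset.sum_congr rfl fun k _ => mul_comm _ _
      rw [this, key j i h, hR, min_eq_left h, max_eq_right h]
  -- L is lower triangular with positive diagonal, hence invertible
  have hLtri : L.BlockTriangular OrderDual.toDual := by
    intro i j hij
    have : ¬ (j : ℕ) ≤ (i : ℕ) := by
      simp only [OrderDual.toDual_lt_toDual] at hij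
      exact not_le.2 hij
    simp only [hL, Matrix.of_apply, if_neg this]
  have hdet : L.det ≠ 0 := by
    rw [Matrix.det_of_lowerTriangular L hLtri]
    refine (Finset.prod_pos fun i _ => ?_).ne'
    simp only [hL, Matrix.of_apply, if_pos (le_refl (i : ℕ)), Finset.Ico_self,
      Finset.prod_empty, one_mul]
    exact hgpos i i.isLt
  have hLunit : IsUnit L := (Matrix.isUnit_iff_isUnit_det L).2 hdet.isUnit
  rw [Matrix.posDef_iff_dotProduct_mulVec]
  constructor
  · rw [Matrix.IsHermitian, Matrix.conjTranspose_eq_transpose_of_trivial]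
    exact hsym
  · intro x hx
    have hinj := Matrix.vecMul_injective_iff_isUnit.2 hLunit
    have hy : x ᵥ* L ≠ 0 := by
      intro h
      exact hx (hinj (by simpa [Matrix.zero_vecMul] using h))
    have hcalc : star x ⬝ᵥ (R *ᵥ x) = (x ᵥ* L) ⬝ᵥ (x ᵥ* L) := by
      rw [star_trivial, hRL, ← Matrix.mulVec_mulVec, Matrix.dotProduct_mulVec,
        Matrix.mulVec_transpose]
    rw [hcalc]
    have hnn : 0 ≤ (x ᵥ* L) ⬝ᵥ (x ᵥ* L) :=
      Finset.sum_nonneg fun i _ => mul_self_nonneg _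
    have hne : (x ᵥ* L) ⬝ᵥ (x ᵥ* L) ≠ 0 :=
      fun h => hy (dotProduct_self_eq_zero.1 h)
    exact lt_of_le_of_ne hnn (Ne.symm hne)
end

section
/- Let d ≥ 2 and let ρ̂_1, …, ρ̂_{d−1} ∈ (−1, 1). Define the lower-triangular matrix L by L_{i1} = ∏_{k=1}^{i−1} ρ̂_k (with L_{11}=1) and, for 2 ≤ j ≤ i, L_{ij} = (∏_{k=j}^{i−1} ρ̂_k)·√(1 − ρ̂_{j−1}²), and L_{ij} = 0 for j > i. Then L·Lᵀ equals the matrix R with R_{ii} = 1 and R_{ij} = ∏_{k=i}^{j−1} ρ̂_k for i < j. -/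
open Finset

lemma doust_telescope (ρ : ℕ → ℝ) (i : ℕ) :
    (∏ k ∈ Finset.range i, ρ k) ^ 2
      + ∑ m ∈ Finset.Ico 1 (i + 1),
          (∏ k ∈ Finset.Ico m i, ρ k) ^ 2 * (1 - ρ (m - 1) ^ 2) = 1 := by
  induction i with
  | zero => simp
  | succ n ih =>
    rw [Finset.sum_Ico_succ_top (by omega), Finset.prod_range_succ]
    have h1 : ∀ m ∈ Finset.Ico 1 (n + 1),
        (∏ k ∈ Finset.Ico m (n + 1), ρ k) ^ 2 * (1 - ρ (m - 1) ^ 2)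
          = ρ n ^ 2 * ((∏ k ∈ Finset.Ico m n, ρ k) ^ 2 * (1 - ρ (m - 1) ^ 2)) := by
      intro m hm
      simp only [Finset.mem_Ico] at hm
      rw [Finset.prod_Ico_succ_top (by omega)]
      ring
    rw [Finset.sum_congr rfl h1, ← Finset.mul_sum]
    simp only [Nat.add_sub_cancel, Finset.Ico_self, Finset.prod_empty, one_pow]
    nlinarith [ih]

/-- The explicit Cholesky factorisation of the Doust correlation matrix:
`L * Lᵀ = R` (indices written 0-based). -/
theorem doust_cholesky
    (d : ℕ) (hd : 2 ≤ d) (ρhat : ℕ → ℝ)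
    (hρ : ∀ k, k < d - 1 → ρhat k ∈ Set.Ioo (-1 : ℝ) 1)
    (L R : Matrix (Fin d) (Fin d) ℝ)
    (hL0 : ∀ i : Fin d, L i ⟨0, by omega⟩ = ∏ k ∈ Finset.range (i : ℕ), ρhat k)
    (hL : ∀ i j : Fin d, 1 ≤ (j : ℕ) → (j : ℕ) ≤ (i : ℕ) →
      L i j = (∏ k ∈ Finset.Ico (j : ℕ) (i : ℕ), ρhat k) *
        Real.sqrt (1 - (ρhat ((j : ℕ) - 1)) ^ 2))
    (hLzero : ∀ i j : Fin d, (i : ℕ) < (j : ℕ) → L i j = 0)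
    (hR : ∀ i j : Fin d,
      R i j = ∏ k ∈ Finset.Ico (min (i : ℕ) (j : ℕ)) (max (i : ℕ) (j : ℕ)), ρhat k) :
    L * L.transpose = R := by
  have key : ∀ i j : Fin d, (i : ℕ) ≤ (j : ℕ) → (L * L.transpose) i j = R i j := by
    intro i j hij
    rw [Matrix.mul_apply, hR, min_eq_left hij, max_eq_right hij]
    simp only [Matrix.transpose_apply]
    set f : ℕ → ℝ := fun m => if h : m < d then L i ⟨m, h⟩ * L j ⟨m, h⟩ else 0 with hf
    have h1 : ∑ m : Fin d, L i m * L j m = ∑ m ∈ Finset.range d, f m := by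
      rw [← Fin.sum_univ_eq_sum_range]
      exact Finset.sum_congr rfl fun m _ => by simp [hf, m.isLt]
    rw [h1]
    have h2 : ∑ m ∈ Finset.range d, f m = ∑ m ∈ Finset.range ((i : ℕ) + 1), f m := by
      refine (Finset.sum_subset (Finset.range_subset_range.2 (by omega)) ?_).symm
      intro m hm hm'
      simp only [Finset.mem_range] at hm hm'
      simp only [hf, dif_pos hm]
      rw [hLzero i ⟨m, hm⟩ (by simp; omega)]
      ring
    rw [h2, Finset.range_eq_Ico, Finset.sum_eq_sum_Ico_succ_bot (by omega) f]
    have hf0 : f 0 = ((∏ k ∈ Finset.range (i : ℕ), ρhat k) ^ 2)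
        * ∏ k ∈ Finset.Ico (i : ℕ) (j : ℕ), ρhat k := by
      have hd0 : 0 < d := by omega
      simp only [hf, dif_pos hd0]
      rw [hL0 i, hL0 j, ← Finset.prod_range_mul_prod_Ico ρhat hij]
      ring
    have hfm : ∀ m ∈ Finset.Ico 1 ((i : ℕ) + 1),
        f m = ((∏ k ∈ Finset.Ico m (i : ℕ), ρhat k) ^ 2 * (1 - ρhat (m - 1) ^ 2))
          * ∏ k ∈ Finset.Ico (i : ℕ) (j : ℕ), ρhat k := by
      intro m hm
      simp only [Finset.mem_Ico] at hm
      have hmd : m < d := lt_of_le_of_lt (by omega) i.isLt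
      have hsq : Real.sqrt (1 - ρhat (m - 1) ^ 2) * Real.sqrt (1 - ρhat (m - 1) ^ 2)
          = 1 - ρhat (m - 1) ^ 2 := by
        apply Real.mul_self_sqrt
        have := hρ (m - 1) (by omega)
        simp only [Set.mem_Ioo] at this
        nlinarith [this.1, this.2]
      simp only [hf, dif_pos hmd]
      rw [hL i ⟨m, hmd⟩ (by simp; omega) (by simp; omega)]
      rw [hL j ⟨m, hmd⟩ (by simp; omega) (by simp; omega)]
      simp only
      rw [show Finset.Ico m (j : ℕ) = Finset.Ico m (i : ℕ) ∪ Finset.Ico (i : ℕ) (j : ℕ) from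
        (Finset.Ico_union_Ico_eq_Ico (by omega) hij).symm,
        Finset.prod_union (Finset.Ico_disjoint_Ico_consecutive _ _ _)]
      linear_combination (∏ k ∈ Finset.Ico m (i : ℕ), ρhat k) ^ 2 * (∏ k ∈ Finset.Ico (i : ℕ) (j : ℕ), ρhat k) * hsq
    rw [hf0, Finset.sum_congr rfl hfm, ← Finset.sum_mul, ← add_mul, doust_telescope, one_mul]
  ext i j
  rcases le_total (i : ℕ) (j : ℕ) with h | h
  · exact key i j h
  · have h1 : (L * L.transpose) i j = (L * L.transpose) j i := by
      simp [Matrix.mul_apply, Matrix.transpose_apply, mul_comm]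
    rw [h1, key j i h, hR, hR, min_comm, max_comm]
end

section
/- Let τ > 0, s > 0, r ∈ ℝ, K > 0 and let c be any price with (s − K e^{−rτ})₊ < c < s. Then there exists a unique σ_iv > 0 such that BS(τ, s, r, σ_iv, K) = c. -/
open Real MeasureTheory Filter Set Topology

/-- Standard normal cumulative distribution function Φ. -/
noncomputable def stdNormalCDF (x : ℝ) : ℝ :=
  ∫ t in Set.Iic x, Real.exp (-t ^ 2 / 2) / Real.sqrt (2 * Real.pi)

noncomputable def gauss (t : ℝ) : ℝ := Real.exp (-t ^ 2 / 2) / Real.sqrt (2 * Real.pi)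

lemma gauss_pos (t : ℝ) : 0 < gauss t :=
  div_pos (Real.exp_pos _) (Real.sqrt_pos.2 (by positivity))

lemma continuous_gauss : Continuous gauss := by
  unfold gauss; fun_prop

lemma gauss_eq : gauss = fun x : ℝ => Real.exp (-(1/2) * x ^ 2) / Real.sqrt (2 * Real.pi) := by
  funext x; unfold gauss; rw [show -(1/2) * x ^ 2 = -x^2/2 by ring]

lemma integrable_gauss : Integrable gauss := by
  rw [gauss_eq]
  exact (integrable_exp_neg_mul_sq (by norm_num : (0:ℝ) < 1/2)).div_const _

lemma integral_gauss_total : ∫ t : ℝ, gauss t = 1 := by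
  rw [gauss_eq]
  rw [MeasureTheory.integral_div]
  rw [integral_gaussian (1/2)]
  rw [show Real.pi / (1/2) = 2 * Real.pi by ring]
  exact div_self (by positivity)

lemma stdNormalCDF_eq (x : ℝ) : stdNormalCDF x = ∫ t in Set.Iic x, gauss t := rfl

lemma tendsto_cdf_atTop : Tendsto stdNormalCDF atTop (𝓝 1) := by
  have h := (MeasureTheory.aecover_Iic (μ := volume) (l := atTop) (tendsto_id (α := ℝ))).integral_tendsto_of_countably_generated integrable_gauss
  rw [integral_gauss_total] at h
  exact h

lemma tendsto_cdf_atBot : Tendsto stdNormalCDF atBot (𝓝 0) := by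
  have key : ∀ x : ℝ, stdNormalCDF x = 1 - ∫ t in Set.Ioi x, gauss t := by
    intro x
    have h := MeasureTheory.integral_add_compl (measurableSet_Iic (a := x)) integrable_gauss
    rw [compl_Iic, integral_gauss_total] at h
    rw [stdNormalCDF_eq]; linarith
  have h2 : Tendsto (fun x : ℝ => ∫ t in Set.Ioi x, gauss t) atBot (𝓝 1) := by
    have h := (MeasureTheory.aecover_Ioi (μ := volume) (l := atBot) (tendsto_id (α := ℝ))).integral_tendsto_of_countably_generated integrable_gauss
    rw [integral_gauss_total] at h
    exact h
  have := (tendsto_const_nhds (x := (1:ℝ)) (f := atBot)).sub h2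
  rw [sub_self] at this
  exact this.congr fun x => (key x).symm

lemma hasDerivAt_cdf (x : ℝ) : HasDerivAt stdNormalCDF (gauss x) x := by
  have heq : stdNormalCDF = fun y => stdNormalCDF 0 + ∫ t in (0:ℝ)..y, gauss t := by
    funext y
    rw [stdNormalCDF_eq, stdNormalCDF_eq]
    have h := intervalIntegral.integral_Iic_sub_Iic (integrable_gauss.integrableOn (s := Set.Iic (0:ℝ))) (integrable_gauss.integrableOn (s := Set.Iic y))
    linarith
  rw [heq]
  have hd : HasDerivAt (fun y => ∫ t in (0:ℝ)..y, gauss t) (gauss x) x :=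
    intervalIntegral.integral_hasDerivAt_right (integrable_gauss.intervalIntegrable)
      (continuous_gauss.stronglyMeasurableAtFilter _ _) continuous_gauss.continuousAt
  exact hd.const_add _

lemma continuous_cdf : Continuous stdNormalCDF :=
  continuous_iff_continuousAt.2 fun x => (hasDerivAt_cdf x).continuousAt

/-- Black–Scholes price of a European call with time to maturity `τ`, spot `s`,
rate `r`, volatility `σ` and strike `K`:
`BS = Φ(d₁) s − Φ(d₂) K e^{−rτ}` with
`d₁ = (ln(s/K) + rτ + σ²τ/2)/(σ√τ)`, `d₂ = d₁ − σ√τ`. -/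
noncomputable def BSCall (τ s r σ K : ℝ) : ℝ :=
  stdNormalCDF ((Real.log (s / K) + r * τ + σ ^ 2 * τ / 2) / (σ * Real.sqrt τ)) * s -
    stdNormalCDF ((Real.log (s / K) + r * τ + σ ^ 2 * τ / 2) / (σ * Real.sqrt τ)
        - σ * Real.sqrt τ) * K * Real.exp (-(r * τ))

/-- Existence and uniqueness of the implied volatility: for any price strictly
between the trivial no-arbitrage bounds there is a unique `σ_iv > 0` matching it. -/
theorem implied_volatility_exists_unique
    (τ s r K c : ℝ) (hτ : 0 < τ) (hs : 0 < s) (hK : 0 < K)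
    (hlb : max (s - K * Real.exp (-(r * τ))) 0 < c) (hub : c < s) :
    ∃! σiv : ℝ, 0 < σiv ∧ BSCall τ s r σiv K = c := by
  obtain ⟨u, hu0, rfl⟩ : ∃ u : ℝ, 0 < u ∧ τ = u ^ 2 :=
    ⟨Real.sqrt τ, Real.sqrt_pos.2 hτ, (Real.sq_sqrt hτ.le).symm⟩
  have hsq : Real.sqrt (u ^ 2) = u := Real.sqrt_sq hu0.le
  set E : ℝ := Real.exp (-(r * u ^ 2)) with hE
  have hE0 : 0 < E := Real.exp_pos _
  set L : ℝ := Real.log s - Real.log K + r * u ^ 2 with hL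
  set d1 : ℝ → ℝ := fun σ => L / u * σ⁻¹ + u / 2 * σ with hd1
  set d2 : ℝ → ℝ := fun σ => L / u * σ⁻¹ - u / 2 * σ with hd2
  set G : ℝ → ℝ := fun σ => stdNormalCDF (d1 σ) * s - stdNormalCDF (d2 σ) * K * E with hG
  -- KE relation: s - K*E sign ↔ sign of L
  have hKE : K * E = Real.exp (Real.log K - r * u ^ 2) := by
    rw [Real.exp_sub, Real.exp_log hK, hE, Real.exp_neg]; ring
  have hseq : s = Real.exp (Real.log s) := (Real.exp_log hs).symm
  -- BSCall agrees with G on positives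
  have hBS : ∀ σ : ℝ, 0 < σ → BSCall (u ^ 2) s r σ K = G σ := by
    intro σ hσ
    unfold BSCall
    rw [hsq, Real.log_div hs.ne' hK.ne']
    have h1 : (Real.log s - Real.log K + r * u ^ 2 + σ ^ 2 * u ^ 2 / 2) / (σ * u) = d1 σ := by
      rw [hd1, hL]; field_simp
    have h2 : d1 σ - σ * u = d2 σ := by
      rw [hd1, hd2]; ring
    rw [h1, h2]
  -- key gaussian identity
  have hident : ∀ σ : ℝ, 0 < σ → gauss (d2 σ) * K * E = gauss (d1 σ) * s := by
    intro σ hσ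
    have key : Real.exp (-d2 σ ^ 2 / 2) * K * E = Real.exp (-d1 σ ^ 2 / 2) * s := by
      have e1 : Real.exp (-d2 σ ^ 2 / 2) * K * E
          = Real.exp (-d2 σ ^ 2 / 2 + Real.log K + -(r * u ^ 2)) := by
        rw [Real.exp_add, Real.exp_add, Real.exp_log hK, hE]
      have e2 : Real.exp (-d1 σ ^ 2 / 2) * s = Real.exp (-d1 σ ^ 2 / 2 + Real.log s) := by
        rw [Real.exp_add, Real.exp_log hs]
      rw [e1, e2, Real.exp_eq_exp]
      have hd : d1 σ ^ 2 - d2 σ ^ 2 = 2 * L := by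
        rw [hd1, hd2]; field_simp; ring
      rw [hL] at hd
      linear_combination hd / 2
    unfold gauss
    rw [div_mul_eq_mul_div, div_mul_eq_mul_div, div_mul_eq_mul_div]
    rw [key]
  -- derivative of G
  have hderiv : ∀ σ : ℝ, 0 < σ → HasDerivAt G (s * u * gauss (d1 σ)) σ := by
    intro σ hσ
    have hd1' : HasDerivAt d1 (L / u * (-(σ ^ 2)⁻¹) + u / 2 * 1) σ :=
      ((hasDerivAt_inv hσ.ne').const_mul (L / u)).add ((hasDerivAt_id σ).const_mul (u / 2))
    have hd2' : HasDerivAt d2 (L / u * (-(σ ^ 2)⁻¹) - u / 2 * 1) σ :=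
      ((hasDerivAt_inv hσ.ne').const_mul (L / u)).sub ((hasDerivAt_id σ).const_mul (u / 2))
    have hc1 : HasDerivAt (fun x => stdNormalCDF (d1 x)) (gauss (d1 σ) * (L / u * (-(σ ^ 2)⁻¹) + u / 2 * 1)) σ :=
      (hasDerivAt_cdf (d1 σ)).comp σ hd1'
    have hc2 : HasDerivAt (fun x => stdNormalCDF (d2 x)) (gauss (d2 σ) * (L / u * (-(σ ^ 2)⁻¹) - u / 2 * 1)) σ :=
      (hasDerivAt_cdf (d2 σ)).comp σ hd2'
    have hGd : HasDerivAt G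
        (gauss (d1 σ) * (L / u * (-(σ ^ 2)⁻¹) + u / 2 * 1) * s -
          gauss (d2 σ) * (L / u * (-(σ ^ 2)⁻¹) - u / 2 * 1) * K * E) σ :=
      (hc1.mul_const s).sub ((hc2.mul_const K).mul_const E)
    convert hGd using 1
    have h := hident σ hσ
    linear_combination (L / u * (-(σ ^ 2)⁻¹) - u / 2 * 1) * h
  have hvega : ∀ σ : ℝ, 0 < σ → 0 < s * u * gauss (d1 σ) := fun σ _ => by
    have := gauss_pos (d1 σ); positivity
  -- strict monotonicity
  have hmono : StrictMonoOn G (Set.Ioi 0) := by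
    apply strictMonoOn_of_deriv_pos (convex_Ioi 0)
    · exact fun x hx => ((hderiv x hx).continuousAt).continuousWithinAt
    · intro x hx
      rw [interior_Ioi] at hx
      rw [(hderiv x hx).deriv]
      exact hvega x hx
  -- limit at +∞ : s
  have hd1T : Tendsto d1 atTop atTop := by
    apply Filter.Tendsto.add_atTop ((tendsto_inv_atTop_zero.const_mul (L / u)))
    exact Tendsto.const_mul_atTop (by positivity) tendsto_id
  have hd2T : Tendsto d2 atTop atBot := by
    rw [hd2]
    simp only [sub_eq_add_neg]
    apply Filter.Tendsto.add_atBot (tendsto_inv_atTop_zero.const_mul (L / u))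
    exact tendsto_neg_atBot_iff.2 (Tendsto.const_mul_atTop (by positivity) tendsto_id)
  have hGT : Tendsto G atTop (𝓝 s) := by
    rw [hG]
    have h1 := (tendsto_cdf_atTop.comp hd1T).mul_const s
    have h2 := ((tendsto_cdf_atBot.comp hd2T).mul_const K).mul_const E
    have h3 := h1.sub h2
    simpa [Function.comp] using h3
  have hmax : max (s - K * E) 0 < c := hlb
  have hinv : Tendsto (fun σ : ℝ => σ⁻¹) (𝓝[>] (0:ℝ)) atTop := tendsto_inv_nhdsGT_zero
  have hlin : Tendsto (fun σ : ℝ => u / 2 * σ) (𝓝[>] (0:ℝ)) (𝓝 0) := by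
    have h := (tendsto_id (x := 𝓝 (0:ℝ))).const_mul (u / 2)
    rw [mul_zero] at h
    exact h.mono_left nhdsWithin_le_nhds
  have hG0 : Tendsto G (𝓝[>] (0:ℝ)) (𝓝 (max (s - K * E) 0)) := by
    rcases lt_trichotomy L 0 with hLneg | hLzero | hLpos
    · have hsK : s < K * E := by
        have h := Real.exp_lt_exp.2 (show Real.log s < Real.log K - r * u ^ 2 by
          rw [hL] at hLneg; linarith)
        rw [Real.exp_log hs, ← hKE] at h
        exact h
      have hm : max (s - K * E) 0 = 0 := max_eq_right (by linarith)
      have hd1B : Tendsto d1 (𝓝[>] (0:ℝ)) atBot := by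
        rw [hd1]
        exact Filter.Tendsto.atBot_add
          ((tendsto_const_mul_atBot_of_neg (div_neg_of_neg_of_pos hLneg hu0)).2 hinv) hlin
      have hd2B : Tendsto d2 (𝓝[>] (0:ℝ)) atBot := by
        rw [hd2]
        simp only [sub_eq_add_neg]
        have hlin' := hlin.neg
        rw [neg_zero] at hlin'
        exact Filter.Tendsto.atBot_add
          ((tendsto_const_mul_atBot_of_neg (div_neg_of_neg_of_pos hLneg hu0)).2 hinv) hlin'
      rw [hm, hG]
      have h3 := ((tendsto_cdf_atBot.comp hd1B).mul_const s).sub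
        (((tendsto_cdf_atBot.comp hd2B).mul_const K).mul_const E)
      simpa [Function.comp] using h3
    · have hsK : s = K * E := by
        rw [hKE, hseq]
        rw [Real.exp_eq_exp, hL] at *
        linarith [hLzero]
      have hm : max (s - K * E) 0 = 0 := max_eq_right (by linarith)
      have hd10 : Tendsto d1 (𝓝[>] (0:ℝ)) (𝓝 0) := by
        rw [hd1]
        simp only [hLzero, zero_div, zero_mul, zero_add]
        exact hlin
      have hd20 : Tendsto d2 (𝓝[>] (0:ℝ)) (𝓝 0) := by
        rw [hd2]
        simp only [hLzero, zero_div, zero_mul, zero_sub]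
        have hlin' := hlin.neg
        rw [neg_zero] at hlin'
        exact hlin'
      rw [hm, hG]
      have h3 := (((continuous_cdf.tendsto 0).comp hd10).mul_const s).sub
        ((((continuous_cdf.tendsto 0).comp hd20).mul_const K).mul_const E)
      have hval : stdNormalCDF 0 * s - stdNormalCDF 0 * K * E = 0 := by
        rw [hsK]; ring
      rw [hval] at h3
      simpa [Function.comp] using h3
    · have hsK : K * E < s := by
        have h := Real.exp_lt_exp.2 (show Real.log K - r * u ^ 2 < Real.log s by
          rw [hL] at hLpos; linarith)
        rw [Real.exp_log hs, ← hKE] at h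
        exact h
      have hm : max (s - K * E) 0 = s - K * E := max_eq_left (by linarith)
      have hd1T' : Tendsto d1 (𝓝[>] (0:ℝ)) atTop := by
        rw [hd1]
        exact Filter.Tendsto.atTop_add
          (Tendsto.const_mul_atTop (div_pos hLpos hu0) hinv) hlin
      have hd2T' : Tendsto d2 (𝓝[>] (0:ℝ)) atTop := by
        rw [hd2]
        simp only [sub_eq_add_neg]
        have hlin' := hlin.neg
        rw [neg_zero] at hlin'
        exact Filter.Tendsto.atTop_add
          (Tendsto.const_mul_atTop (div_pos hLpos hu0) hinv) hlin'
      rw [hm, hG]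
      have h3 := ((tendsto_cdf_atTop.comp hd1T').mul_const s).sub
        (((tendsto_cdf_atTop.comp hd2T').mul_const K).mul_const E)
      have : (1 : ℝ) * s - 1 * K * E = s - K * E := by ring
      rw [this] at h3
      simpa [Function.comp] using h3
  -- existence via IVT
  have hev1 : ∀ᶠ σ in atTop, c < G σ := hGT.eventually_const_lt hub
  have hev2 : ∀ᶠ σ in 𝓝[>] (0:ℝ), G σ < c := hG0.eventually_lt_const hmax
  obtain ⟨b, hbc, hb0⟩ := (hev1.and (eventually_gt_atTop 0)).exists
  have hIoo : Set.Ioo (0:ℝ) b ∈ 𝓝[>] (0:ℝ) := Ioo_mem_nhdsGT_of_mem ⟨le_refl 0, hb0⟩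
  obtain ⟨a, hac, ha0, hab⟩ := (hev2.and hIoo).exists
  have hcont : ContinuousOn G (Set.Icc a b) := fun x hx =>
    ((hderiv x (lt_of_lt_of_le ha0 hx.1)).continuousAt).continuousWithinAt
  have hsub : Set.Ioo (G a) (G b) ⊆ G '' Set.Ioo a b := intermediate_value_Ioo hab.le hcont
  obtain ⟨σ0, hσmem, hσeq⟩ := hsub ⟨hac, hbc⟩
  have hσpos : 0 < σ0 := lt_trans ha0 hσmem.1
  refine ⟨σ0, ⟨hσpos, (hBS σ0 hσpos).trans hσeq⟩, ?_⟩
  rintro y ⟨hy0, hyeq⟩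
  exact hmono.injOn (Set.mem_Ioi.2 hy0) (Set.mem_Ioi.2 hσpos)
    (((hBS y hy0).symm.trans hyeq).trans hσeq.symm)
end
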